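/- arXiv:math-ph/0301004 — 4 statements merged into one kernel-verified Lean document; each statement's English description precedes it below -/
import Mathlib

section
/- The four-dimensional Lie algebra A₄,₁₂ with basis X₁,...,X₄ and brackets [X₁,X₃]=X₁, [X₂,X₃]=X₂, [X₁,X₄]=-X₂, [X₂,X₄]=X₁ is exact symplectic: the linear form α dual to X₁ (α(X₁)=1, α(Xᵢ)=0 otherwise) gives a nondegenerate form ω(X,Y)=α([X,Y]). -/
/-!
With `α = X₁*`, the only nonzero values `α ⁅Xᵢ, Xⱼ⁆` with `i < j` are
`α ⁅X₁, X₃⁆ = α ⁅X₂, X₄⁆ = 1`. So in the basis `(X₁, X₂ | X₃, X₄)` the Gram matrix of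
`ω = α ∘ ⁅·, ·⁆` is the transpose of the standard symplectic matrix `J`, which is invertible;
hence `ω` is nondegenerate.
-/

open Matrix

namespace LieAlgebra

variable {R L : Type*} [CommRing R] [LieRing L] [LieAlgebra R L]

def bracketForm (α : L →ₗ[R] R) : LinearMap.BilinForm R L :=
  (LieModule.toEnd R L L : L →ₗ[R] Module.End R L).compr₂ α

@[simp]
theorem bracketForm_apply (α : L →ₗ[R] R) (x y : L) : bracketForm α x y = α ⁅x, y⁆ := rfl

/-- `B i` plays the role of `X_{i+1}` in the usual presentation of `A₄,₁₂`. -/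
structure IsA412Basis (B : Module.Basis (Fin 4) R L) : Prop where
  lie_zero_two : ⁅B 0, B 2⁆ = B 0
  lie_one_two : ⁅B 1, B 2⁆ = B 1
  lie_zero_three : ⁅B 0, B 3⁆ = -B 1
  lie_one_three : ⁅B 1, B 3⁆ = B 0
  lie_zero_one : ⁅B 0, B 1⁆ = 0
  lie_two_three : ⁅B 2, B 3⁆ = 0

namespace IsA412Basis

variable {B : Module.Basis (Fin 4) R L}

theorem toMatrix_bracketForm_coord_zero (hB : IsA412Basis B) :
    LinearMap.BilinForm.toMatrix (B.reindex (finSumFinEquiv (m := 2) (n := 2)).symm)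
      (bracketForm (B.coord 0)) = (J (Fin 2) R)ᵀ := by
  obtain ⟨h02, h12, h03, h13, h01, h23⟩ := hB
  ext (i | i) (j | j) <;> fin_cases i <;> fin_cases j <;>
    simp [J, LinearMap.BilinForm.toMatrix_apply, finSumFinEquiv, ← lie_skew (B 1) (B 0),
      ← lie_skew (B 2) (B 0), ← lie_skew (B 2) (B 1), ← lie_skew (B 3) (B 0),
      ← lie_skew (B 3) (B 1), ← lie_skew (B 3) (B 2), h02, h12, h03, h13, h01, h23]

theorem nondegenerate_bracketForm_coord_zero [IsDomain R] (hB : IsA412Basis B) :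
    (bracketForm (B.coord 0)).Nondegenerate := by
  refine LinearMap.BilinForm.nondegenerate_of_det_ne_zero _
    (B.reindex (finSumFinEquiv (m := 2) (n := 2)).symm) ?_
  rw [hB.toMatrix_bracketForm_coord_zero, det_transpose]
  exact (isUnit_det_J (Fin 2) R).ne_zero

end IsA412Basis

end LieAlgebra

open LieAlgebra

/-- The Lie algebra `A₄,₁₂` with brackets `⁅X₁,X₃⁆=X₁`, `⁅X₂,X₃⁆=X₂`,
`⁅X₁,X₄⁆=-X₂`, `⁅X₂,X₄⁆=X₁` (other basis brackets zero) is exact symplectic: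
the form `(X,Y) ↦ α ⁅X,Y⁆` with `α` the dual of `X₁` is nondegenerate. -/
theorem stmt_7 (L : Type*) [LieRing L] [LieAlgebra ℝ L]
    (B : Module.Basis (Fin 4) ℝ L)
    (h13 : ⁅B 0, B 2⁆ = B 0) (h23 : ⁅B 1, B 2⁆ = B 1)
    (h14 : ⁅B 0, B 3⁆ = -B 1) (h24 : ⁅B 1, B 3⁆ = B 0)
    (h12 : ⁅B 0, B 1⁆ = 0) (h34 : ⁅B 2, B 3⁆ = 0)
    (α : L →ₗ[ℝ] ℝ) (hα : ∀ i : Fin 4, α (B i) = if i = 0 then 1 else 0) :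
    ∀ X : L, X ≠ 0 → ∃ Y : L, α ⁅X, Y⁆ ≠ 0 := by
  have hα_coord : α = B.coord 0 := B.ext fun i => by simp [hα, Finsupp.single_apply]
  have hω := (IsA412Basis.mk h13 h23 h14 h24 h12 h34).nondegenerate_bracketForm_coord_zero
  intro X hX
  by_contra! hY
  exact hX (hω.1 X fun Y => by simpa [hα_coord] using hY Y)
end

section
/- For the four-dimensional Lie algebra A₄,₂¹ with brackets [X₁,X₄]=X₁, [X₂,X₄]=X₂, [X₃,X₄]=X₂+X₃, every linear form α ∈ g* yields a degenerate 2-form ω(X,Y) = α([X,Y]); hence A₄,₂¹ is not exact symplectic. -/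
/-!
`X₁` and `X₂` span a two-dimensional space on which `ad` acts through a single functional:
`⁅X, Y⁆ = c(Y) • X` for all `X` in it, where `c` is the `X₄`-coordinate. Every `α`
vanishes at some nonzero `X` of this plane, and then `α ⁅X, Y⁆ = c(Y) · α X = 0` for every `Y`.
-/

theorem LinearIndependent.exists_smul_add_smul_ne_zero_map_eq_zero {R M : Type*} [CommRing R]
    [Nontrivial R] [AddCommGroup M] [Module R M] {u v : M} (huv : LinearIndependent R ![u, v])
    (α : M →ₗ[R] R) : ∃ a b : R, a • u + b • v ≠ 0 ∧ α (a • u + b • v) = 0 := by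
  by_cases hu : α u = 0
  · refine ⟨1, 0, fun h => one_ne_zero (LinearIndependent.pair_iff.mp huv 1 0 h).1, ?_⟩
    simp [hu]
  · refine ⟨α v, -α u, fun h => hu (neg_eq_zero.mp (LinearIndependent.pair_iff.mp huv _ _ h).2), ?_⟩
    simp [mul_comm]

theorem Module.Basis.lie_eq_coord_smul {ι R L : Type*} [CommRing R] [LieRing L] [LieAlgebra R L]
    [DecidableEq ι] (B : Module.Basis ι R L) (j : ι) {X : L}
    (hX : ∀ i, ⁅X, B i⁆ = if i = j then X else 0) (Y : L) : ⁅X, Y⁆ = B.coord j Y • X := by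
  have had : LieAlgebra.ad R L X = (B.coord j).smulRight X :=
    B.ext fun i => by by_cases hij : i = j <;> simp [hX, hij]
  exact LinearMap.congr_fun had Y

theorem exists_ne_zero_forall_map_lie_eq_zero {R L : Type*} [CommRing R] [Nontrivial R]
    [LieRing L] [LieAlgebra R L] {u v : L} (huv : LinearIndependent R ![u, v]) (c : L →ₗ[R] R)
    (hu : ∀ Y, ⁅u, Y⁆ = c Y • u) (hv : ∀ Y, ⁅v, Y⁆ = c Y • v) (α : L →ₗ[R] R) :
    ∃ X : L, X ≠ 0 ∧ ∀ Y : L, α ⁅X, Y⁆ = 0 := by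
  obtain ⟨a, b, hne, hker⟩ := huv.exists_smul_add_smul_ne_zero_map_eq_zero α
  refine ⟨a • u + b • v, hne, fun Y => ?_⟩
  have hlie : ⁅a • u + b • v, Y⁆ = c Y • (a • u + b • v) := by
    rw [add_lie, smul_lie, smul_lie, hu, hv, smul_add, smul_comm a, smul_comm b]
  rw [hlie, map_smul, hker, smul_zero]

theorem stmt_8_general (L : Type*) [LieRing L] [LieAlgebra ℝ L]
    (B : Module.Basis (Fin 4) ℝ L)
    (h14 : ⁅B 0, B 3⁆ = B 0) (h24 : ⁅B 1, B 3⁆ = B 1)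
    (h12 : ⁅B 0, B 1⁆ = 0) (h13 : ⁅B 0, B 2⁆ = 0) (h23 : ⁅B 1, B 2⁆ = 0) :
    ∀ α : L →ₗ[ℝ] ℝ, ∃ X : L, X ≠ 0 ∧ ∀ Y : L, α ⁅X, Y⁆ = 0 := by
  have h21 : ⁅B 1, B 0⁆ = 0 := by rw [← lie_skew, h12, neg_zero]
  have hindep : LinearIndependent ℝ ![B 0, B 1] := by
    convert B.linearIndependent.comp ![0, 1] (by decide) using 1
    ext i; fin_cases i <;> rfl
  have h0 : ∀ Y, ⁅B 0, Y⁆ = B.coord 3 Y • B 0 :=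
    B.lie_eq_coord_smul 3 fun i => by fin_cases i <;> simp [h12, h13, h14]
  have h1 : ∀ Y, ⁅B 1, Y⁆ = B.coord 3 Y • B 1 :=
    B.lie_eq_coord_smul 3 fun i => by fin_cases i <;> simp [h21, h23, h24]
  exact exists_ne_zero_forall_map_lie_eq_zero hindep (B.coord 3) h0 h1

/-- For the Lie algebra `A₄,₂¹` with brackets `⁅X₁,X₄⁆=X₁`, `⁅X₂,X₄⁆=X₂`,
`⁅X₃,X₄⁆=X₂+X₃` (other basis brackets zero), every linear form `α` yields a
degenerate form `(X,Y) ↦ α ⁅X,Y⁆`; hence `A₄,₂¹` is not exact symplectic. -/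
theorem stmt_8 (L : Type*) [LieRing L] [LieAlgebra ℝ L]
    (B : Module.Basis (Fin 4) ℝ L)
    (h14 : ⁅B 0, B 3⁆ = B 0) (h24 : ⁅B 1, B 3⁆ = B 1)
    (h34 : ⁅B 2, B 3⁆ = B 1 + B 2)
    (h12 : ⁅B 0, B 1⁆ = 0) (h13 : ⁅B 0, B 2⁆ = 0) (h23 : ⁅B 1, B 2⁆ = 0) :
    ∀ α : L →ₗ[ℝ] ℝ, ∃ X : L, X ≠ 0 ∧ ∀ Y : L, α ⁅X, Y⁆ = 0 :=
  stmt_8_general L B h14 h24 h12 h13 h23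
end

section
/- For the Lie algebra A₄,₉^b (with parameter b ∈ ℝ, -1 ≤ b ≤ 1, b ≠ -1) given by [X₂,X₃]=X₁, [X₁,X₄]=(1+b)X₁, [X₂,X₄]=X₂, [X₃,X₄]=bX₃, the form ω(X,Y)=α([X,Y]) with α the dual of X₁ is nondegenerate; hence A₄,₉^b is exact symplectic. -/
/-! The Gram matrix of `(X, Y) ↦ α ⁅X, Y⁆` in the basis `X₁, …, X₄` is alternating, so its
determinant is the square of its Pfaffian `α⁅X₁,X₄⁆ α⁅X₂,X₃⁆ = 1 + b`, which vanishes only for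
`b = -1`. -/

theorem Matrix.det_alternating_fin_four {R : Type*} [CommRing R] (a b c d e f : R) :
    !![0, a, b, c; -a, 0, d, e; -b, -d, 0, f; -c, -e, -f, 0].det = (a * f - b * e + c * d) ^ 2 := by
  simp [Matrix.det_succ_row_zero, Fin.sum_univ_succ, Fin.succAbove]
  ring

namespace LieAlgebra

section CommRing

variable {R L : Type*} [CommRing R] [LieRing L] [LieAlgebra R L]

def kirillovForm (α : L →ₗ[R] R) : LinearMap.BilinForm R L :=
  LinearMap.mk₂ R (fun X Y ↦ α ⁅X, Y⁆)
    (fun X X' Y ↦ by rw [add_lie, map_add]) (fun c X Y ↦ by rw [smul_lie, map_smul, smul_eq_mul])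
    (fun X Y Y' ↦ by rw [lie_add, map_add]) (fun c X Y ↦ by rw [lie_smul, map_smul, smul_eq_mul])

@[simp]
theorem kirillovForm_apply (α : L →ₗ[R] R) (X Y : L) : kirillovForm α X Y = α ⁅X, Y⁆ := rfl

theorem kirillovForm_swap (α : L →ₗ[R] R) (X Y : L) : kirillovForm α Y X = -kirillovForm α X Y := by
  rw [kirillovForm_apply, kirillovForm_apply, ← lie_skew, map_neg]

theorem det_toMatrix_kirillovForm_fin_four (B : Module.Basis (Fin 4) R L) (α : L →ₗ[R] R) :
    (LinearMap.BilinForm.toMatrix B (kirillovForm α)).det =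
      (α ⁅B 0, B 1⁆ * α ⁅B 2, B 3⁆ - α ⁅B 0, B 2⁆ * α ⁅B 1, B 3⁆ +
        α ⁅B 0, B 3⁆ * α ⁅B 1, B 2⁆) ^ 2 := by
  rw [← Matrix.det_alternating_fin_four]
  congr 1
  ext i j
  rw [LinearMap.BilinForm.toMatrix_apply]
  fin_cases i <;> fin_cases j <;> simp <;> rw [← kirillovForm_apply, kirillovForm_swap] <;> rfl

end CommRing

theorem exists_kirillovForm_ne_zero_of_det_ne_zero {K L ι : Type*} [Field K] [LieRing L]
    [LieAlgebra K L] [Fintype ι] [DecidableEq ι] (B : Module.Basis ι K L) (α : L →ₗ[K] K)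
    (h : (LinearMap.BilinForm.toMatrix B (kirillovForm α)).det ≠ 0) {X : L} (hX : X ≠ 0) :
    ∃ Y, kirillovForm α X Y ≠ 0 := by
  by_contra! hY
  exact hX <| ((LinearMap.BilinForm.nondegenerate_iff_det_ne_zero B).mpr h).1 X hY

end LieAlgebra

open LieAlgebra

theorem stmt_10_general (b : ℝ) (hb : b ≠ -1)
    (L : Type*) [LieRing L] [LieAlgebra ℝ L]
    (B : Module.Basis (Fin 4) ℝ L)
    (h23 : ⁅B 1, B 2⁆ = B 0) (h14 : ⁅B 0, B 3⁆ = (1 + b) • B 0)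
    (h24 : ⁅B 1, B 3⁆ = B 1) (h34 : ⁅B 2, B 3⁆ = b • B 2)
    (h12 : ⁅B 0, B 1⁆ = 0) (h13 : ⁅B 0, B 2⁆ = 0)
    (α : L →ₗ[ℝ] ℝ) (hα : ∀ i : Fin 4, α (B i) = if i = 0 then 1 else 0) :
    ∀ X : L, X ≠ 0 → ∃ Y : L, α ⁅X, Y⁆ ≠ 0 := by
  intro X hX
  refine exists_kirillovForm_ne_zero_of_det_ne_zero B α ?_ hX
  rw [det_toMatrix_kirillovForm_fin_four]
  simp only [h23, h14, h24, h34, h12, h13, map_zero, map_smul, hα, smul_eq_mul]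
  norm_num
  exact fun h ↦ hb (by linarith)

/-- For the Lie algebra `A₄,₉ᵇ` (`-1 ≤ b ≤ 1`, `b ≠ -1`) with brackets
`⁅X₂,X₃⁆=X₁`, `⁅X₁,X₄⁆=(1+b)X₁`, `⁅X₂,X₄⁆=X₂`, `⁅X₃,X₄⁆=bX₃` (other basis
brackets zero), the form `(X,Y) ↦ α ⁅X,Y⁆` with `α` the dual of `X₁` is
nondegenerate; hence `A₄,₉ᵇ` is exact symplectic. -/
theorem stmt_10 (b : ℝ) (hb₁ : -1 ≤ b) (hb₂ : b ≤ 1) (hb : b ≠ -1)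
    (L : Type*) [LieRing L] [LieAlgebra ℝ L]
    (B : Module.Basis (Fin 4) ℝ L)
    (h23 : ⁅B 1, B 2⁆ = B 0) (h14 : ⁅B 0, B 3⁆ = (1 + b) • B 0)
    (h24 : ⁅B 1, B 3⁆ = B 1) (h34 : ⁅B 2, B 3⁆ = b • B 2)
    (h12 : ⁅B 0, B 1⁆ = 0) (h13 : ⁅B 0, B 2⁆ = 0)
    (α : L →ₗ[ℝ] ℝ) (hα : ∀ i : Fin 4, α (B i) = if i = 0 then 1 else 0) :
    ∀ X : L, X ≠ 0 → ∃ Y : L, α ⁅X, Y⁆ ≠ 0 :=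
  stmt_10_general b hb L B h23 h14 h24 h34 h12 h13 α hα
end

section
/- For the 6-dimensional quotient P₆ of the Witt algebra, with basis L₀,...,L₅ and brackets [Lᵢ,Lⱼ] = (j-i)L_{i+j} for i+j ≤ 5 and [Lᵢ,Lⱼ]=0 for i+j > 5, the linear form α dual to L₅ gives a nondegenerate form ω(X,Y)=α([X,Y]); hence P₆ is exact symplectic. -/
/-! In a basis `L₀, …, Lₙ` of the Witt quotient `Pₙ₊₁`, with `α` dual to `Lₙ`, the Gram matrix
`α ⁅Lₖ, Lⱼ⁆` is antidiagonal with entries `j - k = n - 2k`, nonzero when `n` is odd. So if `X` has a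
nonzero coordinate `xᵢ`, then `α ⁅X, Lₙ₋ᵢ⁆ = xᵢ (n - 2i) ≠ 0`. -/

open Module

section

variable {K V : Type*} [Field K] [LieRing V] [LieAlgebra K V]

theorem exists_lie_ne_zero_of_monomial_pairing {ι : Type*} [Fintype ι] (B : Basis ι K V)
    (α : V →ₗ[K] K) (σ : ι → ι) (hσ : ∀ i, α ⁅B i, B (σ i)⁆ ≠ 0)
    (hσ_zero : ∀ i k, k ≠ i → α ⁅B k, B (σ i)⁆ = 0) {X : V} (hX : X ≠ 0) :
    ∃ Y : V, α ⁅X, Y⁆ ≠ 0 := by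
  obtain ⟨i, hi⟩ : ∃ i, B.repr X i ≠ 0 := by
    by_contra! h
    exact hX (B.repr.map_eq_zero_iff.mp (Finsupp.ext h))
  refine ⟨B (σ i), ?_⟩
  have expand : α ⁅X, B (σ i)⁆ = ∑ k, B.repr X k * α ⁅B k, B (σ i)⁆ := by
    conv_lhs => rw [← B.sum_repr X]
    rw [sum_lie, map_sum]
    simp [smul_lie]
  rw [expand, Finset.sum_eq_single i (fun k _ hk => by rw [hσ_zero i k hk, mul_zero]) (by simp)]
  exact mul_ne_zero hi (hσ i)

def IsWittQuotientBasis {n : ℕ} (B : Basis (Fin (n + 1)) K V) : Prop :=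
  ∀ i j : Fin (n + 1), ⁅B i, B j⁆ =
    if h : (i : ℕ) + (j : ℕ) ≤ n then
      ((j : K) - (i : K)) • B ⟨(i : ℕ) + (j : ℕ), by omega⟩
    else 0

namespace IsWittQuotientBasis

variable {n : ℕ} {B : Basis (Fin (n + 1)) K V} {α : V →ₗ[K] K}

theorem apply_lie (hB : IsWittQuotientBasis B)
    (hα : ∀ i, α (B i) = if i = Fin.last n then 1 else 0) (k j : Fin (n + 1)) :
    α ⁅B k, B j⁆ = if (k : ℕ) + j = n then (j : K) - k else 0 := by
  rw [hB]
  split_ifs <;> simp_all [Fin.ext_iff]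

theorem apply_lie_rev (hB : IsWittQuotientBasis B)
    (hα : ∀ i, α (B i) = if i = Fin.last n then 1 else 0) (i k : Fin (n + 1)) :
    α ⁅B k, B i.rev⁆ = if k = i then ((i.rev : ℕ) : K) - i else 0 := by
  rw [hB.apply_lie hα]
  by_cases hki : k = i
  · subst hki
    rw [if_pos (by rw [Fin.val_rev]; omega), if_pos rfl]
  · rw [if_neg hki, if_neg (by simp only [Fin.ext_iff, Fin.val_rev] at hki ⊢; omega)]

theorem exists_lie_ne_zero [CharZero K] (hB : IsWittQuotientBasis B) (hn : Odd n)
    (hα : ∀ i, α (B i) = if i = Fin.last n then 1 else 0) {X : V} (hX : X ≠ 0) :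
    ∃ Y : V, α ⁅X, Y⁆ ≠ 0 := by
  refine exists_lie_ne_zero_of_monomial_pairing B α Fin.rev (fun i => ?_)
    (fun i k hk => by rw [hB.apply_lie_rev hα, if_neg hk]) hX
  rw [hB.apply_lie_rev hα, if_pos rfl, sub_ne_zero, Ne, Nat.cast_inj, Fin.val_rev]
  intro h
  obtain ⟨m, rfl⟩ := hn
  omega

end IsWittQuotientBasis

end

/-- The 6-dimensional quotient `P₆` of the Witt algebra, with basis `L₀,...,L₅`
and brackets `⁅Lᵢ,Lⱼ⁆ = (j-i)L_{i+j}` for `i+j ≤ 5` and `0` otherwise, is exact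
symplectic: the linear form dual to `L₅` gives a nondegenerate form
`(X,Y) ↦ α ⁅X,Y⁆`. -/
theorem stmt_15 (V : Type*) [LieRing V] [LieAlgebra ℝ V]
    (B : Module.Basis (Fin 6) ℝ V)
    (hbr : ∀ i j : Fin 6, ⁅B i, B j⁆ =
      if h : (i : ℕ) + (j : ℕ) ≤ 5 then
        ((j : ℝ) - (i : ℝ)) • B ⟨(i : ℕ) + (j : ℕ), by omega⟩
      else 0)
    (α : V →ₗ[ℝ] ℝ) (hα : ∀ i : Fin 6, α (B i) = if i = 5 then 1 else 0) :
    ∀ X : V, X ≠ 0 → ∃ Y : V, α ⁅X, Y⁆ ≠ 0 :=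
  fun _ hX => IsWittQuotientBasis.exists_lie_ne_zero (n := 5) hbr ⟨2, rfl⟩ hα hX
end
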